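/- arXiv:2403.04055 — 3 statements merged into one kernel-verified Lean document; each statement's English description precedes it below -/
import Mathlib

section
/- Let r ≥ 6 and let c be an edge coloring of K_r in which every color class is a matching (a 'parallel' coloring with any number of colors ≤ r, each class of size ≤ ⌊r/2⌋). Then the number of copies of K_4 in K_r that are not rainbow under c is at most r·C(⌊r/2⌋, 2). -/
/-- A coloring is *parallel* if every color class is a matching: no two edges
sharing a vertex receive the same color. -/
def Parallel {V C : Type*} (c : Sym2 V → C) : Prop :=
  ∀ u v w : V, v ≠ u → w ≠ u → v ≠ w → c s(u, v) ≠ c s(u, w)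

/-- A vertex subset `S` is rainbow if all edges within `S` get pairwise distinct colors. -/
def IsRainbow {V C : Type*} (c : Sym2 V → C) (S : Finset V) : Prop :=
  ∀ a ∈ S, ∀ b ∈ S, ∀ a' ∈ S, ∀ b' ∈ S, a ≠ b → a' ≠ b' →
    s(a, b) ≠ s(a', b') → c s(a, b) ≠ c s(a', b')

open Finset

noncomputable def ends {V : Type*} [DecidableEq V] (e : Sym2 V) : Finset V :=
  Sym2.lift ⟨fun a b => {a, b}, fun a b => Finset.pair_comm a b⟩ e

@[simp] lemma ends_mk {V : Type*} [DecidableEq V] (a b : V) :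
    ends s(a, b) = {a, b} := rfl

lemma ends_card {V : Type*} [DecidableEq V] (e : Sym2 V) (h : ¬ e.IsDiag) :
    (ends e).card = 2 := by
  induction e using Sym2.ind with
  | _ a b =>
    rw [Sym2.mk_isDiag_iff] at h
    simp [Finset.card_pair h]

lemma ends_disjoint {V C : Type*} [DecidableEq V] {c : Sym2 V → C} (hc : Parallel c)
    {e e' : Sym2 V} (hd : ¬ e.IsDiag) (hd' : ¬ e'.IsDiag) (hne : e ≠ e')
    (hcol : c e = c e') : Disjoint (ends e) (ends e') := by
  induction e using Sym2.ind with
  | _ a b =>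
  induction e' using Sym2.ind with
  | _ a' b' =>
  rw [Sym2.mk_isDiag_iff] at hd hd'
  rw [Finset.disjoint_left]
  intro x hx hx'
  simp only [ends_mk, Finset.mem_insert, Finset.mem_singleton] at hx hx'
  -- x is a shared vertex; rewrite both edges with x as first coordinate
  have key : ∀ y y' : V, y ≠ x → y' ≠ x → s(x, y) = s(a, b) → s(x, y') = s(a', b') → False := by
    intro y y' hy hy' h1 h2
    have hyy' : y ≠ y' := by
      rintro rfl
      exact hne (h1 ▸ h2 ▸ rfl)
    exact hc x y y' hy hy' hyy' (by rw [h1, h2, hcol])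
  rcases hx with rfl | rfl <;> rcases hx' with rfl | rfl
  · exact key b b' (Ne.symm hd) (Ne.symm hd') rfl rfl
  · exact key b a' (Ne.symm hd) hd' rfl (Sym2.eq_swap)
  · exact key a b' hd (Ne.symm hd') (Sym2.eq_swap) rfl
  · exact key a a' hd hd' (Sym2.eq_swap) (Sym2.eq_swap)


/-- Under a parallel `r`-coloring of `K_r` (`r ≥ 6`), there are at most
`r * C(⌊r/2⌋, 2)` non-rainbow copies of `K_4`. -/
theorem stmt_4 (r : ℕ) (hr : 6 ≤ r) (c : Sym2 (Fin r) → Fin r) (hc : Parallel c) :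
    {S : Finset (Fin r) | S.card = 4 ∧ ¬ IsRainbow c S}.ncard ≤
      r * Nat.choose (r / 2) 2 := by
  classical
  have hrpos : 0 < r := by omega
  -- color classes
  set F : Fin r → Finset (Sym2 (Fin r)) :=
    fun k => univ.filter (fun e => c e = k ∧ ¬ e.IsDiag) with hF
  -- each class has size ≤ r / 2
  have hFcard : ∀ k, (F k).card ≤ r / 2 := by
    intro k
    have hdisj : (F k : Set (Sym2 (Fin r))).PairwiseDisjoint ends := by
      intro e he e' he' hne
      simp only [hF, coe_filter, Set.mem_setOf_eq, mem_univ, true_and] at he he'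
      exact ends_disjoint hc he.2 he'.2 hne (he.1.trans he'.1.symm)
    have h1 : ((F k).biUnion ends).card = ∑ e ∈ F k, (ends e).card :=
      Finset.card_biUnion (fun e he e' he' hne => hdisj he he' hne)
    have h2 : ∑ e ∈ F k, (ends e).card = 2 * (F k).card := by
      rw [Finset.sum_congr rfl (fun e he => ends_card e (by
        simp only [hF, mem_filter] at he; exact he.2.2))]
      simp [mul_comm]
    have h3 : ((F k).biUnion ends).card ≤ r := by
      simpa using Finset.card_le_card ((F k).biUnion ends).subset_univ
    rw [Nat.le_div_iff_mul_le (by norm_num)]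
    omega
  -- target finset of (color, pair of same-colored edges)
  set tF : Finset (Fin r × Finset (Sym2 (Fin r))) :=
    univ.filter (fun p => p.2.card = 2 ∧ ∀ e ∈ p.2, c e = p.1 ∧ ¬ e.IsDiag) with htF
  -- bound on the target
  have htFcard : tF.card ≤ r * Nat.choose (r / 2) 2 := by
    have hsub : tF ⊆ univ.biUnion (fun k => {k} ×ˢ ((F k).powersetCard 2)) := by
      intro p hp
      simp only [htF, mem_filter, mem_univ, true_and] at hp
      simp only [mem_biUnion, mem_univ, true_and, mem_product, mem_singleton,
        mem_powersetCard]
      exact ⟨p.1, rfl, fun e he => by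
        simp only [hF, mem_filter, mem_univ, true_and]; exact hp.2 e he, hp.1⟩
    calc tF.card ≤ (univ.biUnion (fun k => {k} ×ˢ ((F k).powersetCard 2))).card :=
          Finset.card_le_card hsub
      _ ≤ ∑ k : Fin r, ({k} ×ˢ ((F k).powersetCard 2)).card := Finset.card_biUnion_le
      _ = ∑ k : Fin r, Nat.choose ((F k).card) 2 := by
          simp [Finset.card_product, Finset.card_powersetCard]
      _ ≤ ∑ _k : Fin r, Nat.choose (r / 2) 2 :=
          Finset.sum_le_sum (fun k _ => Nat.choose_le_choose 2 (hFcard k))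
      _ = r * Nat.choose (r / 2) 2 := by simp [mul_comm]
  -- the key extraction: every non-rainbow 4-set gives such a pair
  have hex : ∀ S : Finset (Fin r), S.card = 4 → ¬ IsRainbow c S →
      ∃ p : Fin r × Finset (Sym2 (Fin r)), p ∈ tF ∧ S = p.2.biUnion ends := by
    intro S hS4 hnr
    simp only [IsRainbow, not_forall] at hnr
    obtain ⟨a, ha, b, hb, a', ha', b', hb', hab, hab', hne, hcc⟩ := hnr
    rw [not_not] at hcc
    have hd : ¬ (s(a,b)).IsDiag := by rw [Sym2.mk_isDiag_iff]; exact hab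
    have hd' : ¬ (s(a',b')).IsDiag := by rw [Sym2.mk_isDiag_iff]; exact hab'
    have hdisj := ends_disjoint hc hd hd' hne hcc
    refine ⟨(c s(a,b), {s(a,b), s(a',b')}), ?_, ?_⟩
    · simp only [htF, mem_filter, mem_univ, true_and]
      refine ⟨Finset.card_pair hne, ?_⟩
      intro e he
      rcases Finset.mem_insert.1 he with rfl | he
      · exact ⟨rfl, hd⟩
      · rw [Finset.mem_singleton] at he; subst he
        exact ⟨hcc.symm, hd'⟩
    · have hU : ({s(a,b), s(a',b')} : Finset (Sym2 (Fin r))).biUnion ends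
          = {a, b} ∪ {a', b'} := by
        simp [Finset.biUnion_insert]
      rw [hU]
      have hsub : ({a, b} ∪ {a', b'} : Finset (Fin r)) ⊆ S := by
        intro x hx
        simp only [Finset.mem_union, Finset.mem_insert, Finset.mem_singleton] at hx
        rcases hx with (rfl | rfl) | (rfl | rfl) <;> assumption
      have hcard : ({a, b} ∪ {a', b'} : Finset (Fin r)).card = 4 := by
        rw [Finset.card_union_of_disjoint (by simpa using hdisj),
          Finset.card_pair hab, Finset.card_pair hab']
      exact (Finset.eq_of_subset_of_card_le hsub (by rw [hcard, hS4])).symm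
  -- choose such a pair for each S
  haveI : Nonempty (Fin r) := ⟨⟨0, hrpos⟩⟩
  choose! p hp1 hp2 using hex
  have := Set.ncard_le_ncard_of_injOn p
    (s := {S : Finset (Fin r) | S.card = 4 ∧ ¬ IsRainbow c S}) (t := ↑tF)
    (fun S hS => hp1 S hS.1 hS.2)
    (fun S hS S' hS' heq => by
      rw [hp2 S hS.1 hS.2, hp2 S' hS'.1 hS'.2, heq])
    tF.finite_toSet
  rw [Set.ncard_coe_finset] at this
  exact this.trans htFcard
end

section
/- Let t ≥ 4 and r ≥ C(t,2), and let c be a parallel r-coloring of E(K_r) (every color class a matching). Then the number of non-rainbow copies of K_t in K_r under c is at most r·C(⌊r/2⌋,2)·C(r−4, t−4). -/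
open Finset

section Aux

variable {V K : Type*} [Fintype V] [DecidableEq V] [DecidableEq K]

/-- The vertex set of an edge, as a finset. -/
def evF (e : Sym2 V) : Finset V := Finset.univ.filter (· ∈ e)

lemma evF_pair (a b : V) : evF (s(a, b)) = {a, b} := by
  ext x; simp [evF, Sym2.mem_iff]

lemma card_evF {e : Sym2 V} (h : ¬ e.IsDiag) : (evF e).card = 2 := by
  induction e using Sym2.ind with
  | _ a b =>
    rw [Sym2.mk_isDiag_iff] at h
    rw [evF_pair, Finset.card_pair h]

/-- color class -/
def cls (c : Sym2 V → K) (k : K) : Finset (Sym2 V) :=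
  Finset.univ.filter (fun e => ¬ e.IsDiag ∧ c e = k)

lemma cls_disj {c : Sym2 V → K} (hc : Parallel c) {k : K} {e f : Sym2 V}
    (he : e ∈ cls c k) (hf : f ∈ cls c k) (hef : e ≠ f) :
    Disjoint (evF e) (evF f) := by
  simp only [cls, Finset.mem_filter, Finset.mem_univ, true_and] at he hf
  rw [Finset.disjoint_left]
  intro u hu hu'
  simp only [evF, Finset.mem_filter, Finset.mem_univ, true_and] at hu hu'
  obtain ⟨v, rfl⟩ := Sym2.mem_iff_exists.mp hu
  obtain ⟨w, rfl⟩ := Sym2.mem_iff_exists.mp hu'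
  rw [Sym2.mk_isDiag_iff] at he hf
  have hvw : v ≠ w := fun h => hef (by rw [h])
  exact hc u v w (Ne.symm he.1) (Ne.symm hf.1) hvw (he.2.trans hf.2.symm)

lemma cls_card {c : Sym2 V → K} (hc : Parallel c) (k : K) :
    (cls c k).card ≤ Fintype.card V / 2 := by
  rw [Nat.le_div_iff_mul_le two_pos]
  have h1 : ((cls c k).biUnion evF).card = (cls c k).card * 2 := by
    rw [Finset.card_biUnion (fun e he f hf hef => cls_disj hc he hf hef)]
    rw [Finset.sum_congr rfl (fun e he => card_evF
      (by simp only [cls, Finset.mem_filter] at he; exact he.2.1))]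
    simp [mul_comm]
  calc (cls c k).card * 2 = ((cls c k).biUnion evF).card := h1.symm
    _ ≤ Fintype.card V := Finset.card_le_univ _

lemma verts_card {c : Sym2 V → K} (hc : Parallel c) {k : K} {p : Finset (Sym2 V)}
    (hp : p ∈ (cls c k).powersetCard 2) : (p.biUnion evF).card = 4 := by
  rw [Finset.mem_powersetCard] at hp
  rw [Finset.card_biUnion (fun e he f hf hef => cls_disj hc (hp.1 he) (hp.1 hf) hef)]
  rw [Finset.sum_congr rfl (fun e he => card_evF
    (by have := hp.1 he; simp only [cls, Finset.mem_filter] at this; exact this.2.1))]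
  simp [hp.2]

end Aux

/-- Under a parallel `r`-coloring of `K_r` with `t ≥ 4` and `r ≥ C(t,2)`, there are at
most `r * C(⌊r/2⌋, 2) * C(r-4, t-4)` non-rainbow copies of `K_t`. -/
theorem stmt_6 (t r : ℕ) (ht : 4 ≤ t) (hr : t.choose 2 ≤ r)
    (c : Sym2 (Fin r) → Fin r) (hc : Parallel c) :
    {S : Finset (Fin r) | S.card = t ∧ ¬ IsRainbow c S}.ncard ≤
      r * Nat.choose (r / 2) 2 * Nat.choose (r - 4) (t - 4) := by
  classical
  have hr6 : 6 ≤ r := le_trans (by calc 6 = Nat.choose 4 2 := by decide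
    _ ≤ t.choose 2 := Nat.choose_le_choose 2 ht) hr
  haveI : Nonempty (Fin r) := ⟨⟨0, by omega⟩⟩
  haveI : Nonempty ((_ : Fin r) × (_ : Finset (Sym2 (Fin r))) × Finset (Fin r)) :=
    ⟨⟨Classical.arbitrary _, ∅, ∅⟩⟩
  set Bad : Finset (Σ _ : Fin r, Σ _ : Finset (Sym2 (Fin r)), Finset (Fin r)) :=
    (Finset.univ : Finset (Fin r)).sigma (fun k =>
      ((cls c k).powersetCard 2).sigma (fun p =>
        (Finset.univ \ p.biUnion evF).powersetCard (t - 4))) with hBad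
  -- existence of witness
  have hex : ∀ S : Finset (Fin r), S.card = t → ¬ IsRainbow c S →
      ∃ q ∈ Bad, (q.2.1.biUnion evF) ∪ q.2.2 = S := by
    intro S hcard hnr
    simp only [IsRainbow, not_forall] at hnr
    obtain ⟨a, ha, b, hb, a', ha', b', hb', hab, hab', hne, hcc⟩ := hnr
    rw [not_not] at hcc
    set e := s(a, b)
    set f := s(a', b')
    have hecls : e ∈ cls c (c e) := by
      simp [cls, e, Sym2.mk_isDiag_iff, hab]
    have hfcls : f ∈ cls c (c e) := by
      simp [cls, f, Sym2.mk_isDiag_iff, hab', hcc.symm]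
    have hp : ({e, f} : Finset (Sym2 (Fin r))) ∈ (cls c (c e)).powersetCard 2 := by
      rw [Finset.mem_powersetCard]
      constructor
      · intro x hx
        rcases Finset.mem_insert.mp hx with h | h
        · exact h ▸ hecls
        · exact (Finset.mem_singleton.mp h) ▸ hfcls
      · exact Finset.card_pair hne
    have hverts : ({e, f} : Finset (Sym2 (Fin r))).biUnion evF = {a, b, a', b'} := by
      rw [Finset.biUnion_insert, Finset.singleton_biUnion, evF_pair, evF_pair]
      ext x; simp; tauto
    have hvS : ({e, f} : Finset (Sym2 (Fin r))).biUnion evF ⊆ S := by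
      rw [hverts]
      intro x hx
      simp only [Finset.mem_insert, Finset.mem_singleton] at hx
      rcases hx with rfl | rfl | rfl | rfl <;> assumption
    have hv4 : (({e, f} : Finset (Sym2 (Fin r))).biUnion evF).card = 4 :=
      verts_card hc hp
    refine ⟨⟨c e, {e, f}, S \ ({e, f} : Finset (Sym2 (Fin r))).biUnion evF⟩, ?_, ?_⟩
    · rw [hBad]
      simp only [Finset.mem_sigma, Finset.mem_univ, true_and]
      refine ⟨hp, ?_⟩
      rw [Finset.mem_powersetCard]
      constructor
      · intro x hx
        simp only [Finset.mem_sdiff, Finset.mem_univ, true_and]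
        exact (Finset.mem_sdiff.mp hx).2
      · rw [Finset.card_sdiff_of_subset hvS, hcard, hv4]
    · exact Finset.union_sdiff_of_subset hvS
  -- the injection
  set recov : (Σ _ : Fin r, Σ _ : Finset (Sym2 (Fin r)), Finset (Fin r)) → Finset (Fin r) :=
    fun q => (q.2.1.biUnion evF) ∪ q.2.2 with hrecov
  set F : Finset (Fin r) → (Σ _ : Fin r, Σ _ : Finset (Sym2 (Fin r)), Finset (Fin r)) :=
    fun S => if h : ∃ q ∈ Bad, recov q = S then h.choose else Classical.arbitrary _
  have hF : ∀ S ∈ {S : Finset (Fin r) | S.card = t ∧ ¬ IsRainbow c S},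
      F S ∈ (↑Bad : Set _) ∧ recov (F S) = S := by
    intro S hS
    obtain ⟨q, hq, hq2⟩ := hex S hS.1 hS.2
    have h : ∃ q ∈ Bad, recov q = S := ⟨q, hq, hq2⟩
    simp only [F, dif_pos h]
    exact ⟨h.choose_spec.1, h.choose_spec.2⟩
  have hle : {S : Finset (Fin r) | S.card = t ∧ ¬ IsRainbow c S}.ncard ≤ Bad.card := by
    rw [← Set.ncard_coe_finset]
    exact Set.ncard_le_ncard_of_injOn F (fun S hS => (hF S hS).1)
      (fun S hS S' hS' hFF => by rw [← (hF S hS).2, ← (hF S' hS').2, hFF])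
      Bad.finite_toSet
  refine hle.trans ?_
  -- now count Bad
  rw [hBad, Finset.card_sigma]
  calc ∑ k : Fin r, (((cls c k).powersetCard 2).sigma fun p =>
        (Finset.univ \ p.biUnion evF).powersetCard (t - 4)).card
      ≤ ∑ _k : Fin r, Nat.choose (r / 2) 2 * Nat.choose (r - 4) (t - 4) := by
        apply Finset.sum_le_sum
        intro k _
        rw [Finset.card_sigma]
        calc ∑ p ∈ (cls c k).powersetCard 2,
              ((Finset.univ \ p.biUnion evF).powersetCard (t - 4)).card
            ≤ ∑ _p ∈ (cls c k).powersetCard 2, Nat.choose (r - 4) (t - 4) := by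
              apply Finset.sum_le_sum
              intro p hp
              rw [Finset.card_powersetCard]
              apply Nat.choose_le_choose
              rw [Finset.card_sdiff_of_subset (Finset.subset_univ _)]
              simp [verts_card hc hp]
          _ = ((cls c k).card.choose 2) * Nat.choose (r - 4) (t - 4) := by
              rw [Finset.sum_const, Finset.card_powersetCard, smul_eq_mul]
          _ ≤ Nat.choose (r / 2) 2 * Nat.choose (r - 4) (t - 4) := by
              apply Nat.mul_le_mul_right
              apply Nat.choose_le_choose
              simpa using cls_card hc k
    _ = r * Nat.choose (r / 2) 2 * Nat.choose (r - 4) (t - 4) := by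
        rw [Finset.sum_const, Finset.card_univ, Fintype.card_fin, smul_eq_mul, mul_assoc]
end

section
/- Let r ≥ 3, let c be a parallel r-coloring of E(K_r) (so every K_3 is rainbow), and let F(n) count rainbow triangles in the iterated blow-up coloring of K_n, n = r^k. Then F(r^k) ≥ (r^{3k} − r^k)/(r^3 − r) · C(r,3). -/
/-- The iterated blow-up coloring: vertices of `K_{r^k}` are strings in `Fin k → Fin r`,
and the color of an edge `{u, v}` is the color (under `c`) of the edge of `K_r` given by
the first coordinate where `u` and `v` differ (junk value `0` on the diagonal). -/
def blowColor {r k : ℕ} (c : Sym2 (Fin r) → Fin r) (u v : Fin k → Fin r) : ℕ :=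
  if h : (Finset.univ.filter fun j => u j ≠ v j).Nonempty then
    (c s(u ((Finset.univ.filter fun j => u j ≠ v j).min' h),
        v ((Finset.univ.filter fun j => u j ≠ v j).min' h)) : ℕ)
  else 0

/-! A triple `t` of words of length `k` over `Fin r` is *split* if the three words agree before
some coordinate `j` and are pairwise distinct at `j`. Looking at the first coordinate, a split
triple either splits there or agrees there and splits later, so their number `g k` satisfies
`g (k + 1) = r * g k + r (r - 1) (r - 2) * r ^ (3 k)`, whence
`g k * (r ^ 3 - r) = r (r - 1) (r - 2) * (r ^ (3 k) - r ^ k)`. The blow-up coloring gives the edges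
of a split triple the colors of the triangle `t · j` of `K_r`, which is rainbow because any two of
its edges share a vertex and `c` is parallel. Each rainbow triangle arises from at most `3!`
ordered triples, so `g k ≤ 6 * F (r ^ k)`. -/

open Function Finset

lemma card_le_factorial_mul_ncard {ι W : Type*} [Fintype ι] [Finite W] [DecidableEq W]
    (𝒯 : Set (Finset W)) (h𝒯 : ∀ S ∈ 𝒯, S.card = Fintype.card ι) :
    Nat.card {t : ι → W // Injective t ∧ univ.image t ∈ 𝒯} ≤
      (Fintype.card ι).factorial * 𝒯.ncard := by
  classical
  have := Fintype.ofFinite W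
  rw [Nat.card_eq_fintype_card, Fintype.card_subtype, Set.ncard_eq_toFinset_card']
  refine card_le_mul_card_image_of_maps_to (f := fun t => univ.image t)
    (fun t ht => by simpa using (mem_filter.1 ht).2.2) _ fun S hS => ?_
  have hfiber : {t ∈ univ.filter (fun t : ι → W => Injective t ∧ univ.image t ∈ 𝒯) |
      univ.image t = S} ⊆ univ.image fun e : ι ↪ S => fun i => (e i : W) := by
    intro t ht
    simp only [mem_filter, mem_univ, true_and] at ht
    obtain ⟨⟨ht_inj, -⟩, rfl⟩ := ht
    exact mem_image.2 ⟨⟨fun i => ⟨t i, mem_image_of_mem _ (mem_univ i)⟩,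
      fun a b h => ht_inj (congrArg Subtype.val h)⟩, mem_univ _, rfl⟩
  calc _ ≤ _ := card_le_card hfiber
    _ ≤ Fintype.card (ι ↪ S) := card_image_le
    _ = _ := by
      rw [Fintype.card_embedding_eq, Fintype.card_coe, h𝒯 S (by simpa using hS),
        Nat.descFactorial_self]

lemma Parallel.apply_ne_apply {V C : Type*} {c : Sym2 V → C} (hc : Parallel c) {e e' : Sym2 V}
    (he : ¬e.IsDiag) (he' : ¬e'.IsDiag) (hne : e ≠ e') {v : V} (hv : v ∈ e) (hv' : v ∈ e') :
    c e ≠ c e' := by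
  obtain ⟨w, rfl⟩ := Sym2.mem_iff_exists.1 hv
  obtain ⟨w', rfl⟩ := Sym2.mem_iff_exists.1 hv'
  rw [Sym2.mk_isDiag_iff] at he he'
  exact hc v w w' (Ne.symm he) (Ne.symm he') fun h => hne (h ▸ rfl)

lemma Parallel.apply_map_ne_apply_map {V C : Type*} {c : Sym2 V → C} (hc : Parallel c)
    {x : Fin 3 → V} (hx : Injective x) {e e' : Sym2 (Fin 3)} (he : ¬e.IsDiag)
    (he' : ¬e'.IsDiag) (hne : e ≠ e') : c (e.map x) ≠ c (e'.map x) := by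
  have edges_meet : ∀ e e' : Sym2 (Fin 3), ¬e.IsDiag → ¬e'.IsDiag → ∃ v, v ∈ e ∧ v ∈ e' := by
    decide
  obtain ⟨v, hv, hv'⟩ := edges_meet e e' he he'
  exact hc.apply_ne_apply (by rwa [Sym2.isDiag_map hx]) (by rwa [Sym2.isDiag_map hx])
    ((Sym2.map.injective hx).ne hne) (Sym2.mem_map.2 ⟨v, hv, rfl⟩) (Sym2.mem_map.2 ⟨v, hv', rfl⟩)

namespace IteratedBlowUp

section Split

variable {ι α : Type*}

def IsSplit {k : ℕ} (t : ι → Fin k → α) : Prop :=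
  ∃ j, (∀ i < j, ∀ a b, t a i = t b i) ∧ Injective fun a => t a j

lemma IsSplit.injective {k : ℕ} {t : ι → Fin k → α} (ht : IsSplit t) : Injective t := by
  obtain ⟨j, -, hj⟩ := ht
  exact fun a b h => hj (congrFun h j)

lemma isSplit_cons_iff {k : ℕ} (x : ι → α) (t : ι → Fin k → α) :
    IsSplit (fun a => Fin.cons (x a) (t a) : ι → Fin (k + 1) → α) ↔
      ((∀ a b, x a = x b) ∧ IsSplit t) ∨ Injective x := by
  constructor
  · rintro ⟨j, hlt, hj⟩
    cases j using Fin.cases with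
    | zero => exact Or.inr (by simpa using hj)
    | succ j =>
      refine Or.inl ⟨fun a b => by simpa using hlt 0 j.succ_pos a b, j, fun i hi a b => ?_,
        by simpa using hj⟩
      simpa using hlt i.succ (Fin.succ_lt_succ_iff.2 hi) a b
  · rintro (⟨hx, j, hlt, hj⟩ | hx)
    · refine ⟨j.succ, fun i hi a b => ?_, by simpa using hj⟩
      cases i using Fin.cases with
      | zero => simpa using hx a b
      | succ i => simpa using hlt i (Fin.succ_lt_succ_iff.1 hi) a b
    · exact ⟨0, fun i hi => absurd hi (Fin.not_lt_zero i), by simpa using hx⟩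

def consEquiv (ι α : Type*) (k : ℕ) : (ι → α) × (ι → Fin k → α) ≃ (ι → Fin (k + 1) → α) :=
  (Equiv.arrowProdEquivProdArrow _ _ _).symm.trans
    (Equiv.piCongrRight fun _ => Fin.consEquiv fun _ => α)

noncomputable def splitCount (ι α : Type*) (k : ℕ) : ℕ :=
  Nat.card {t : ι → Fin k → α // IsSplit t}

lemma splitCount_zero : splitCount ι α 0 = 0 := by
  have : IsEmpty {t : ι → Fin 0 → α // IsSplit t} := ⟨fun ⟨_, j, _⟩ => j.elim0⟩
  simp [splitCount]

lemma card_constant_functions [Nonempty ι] :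
    Nat.card {x : ι → α // ∀ a b, x a = x b} = Nat.card α :=
  Nat.card_congr
    { toFun x := x.1 (Classical.arbitrary ι)
      invFun c := ⟨const ι c, fun _ _ => rfl⟩
      left_inv x := Subtype.ext <| funext fun _ => x.2 _ _
      right_inv _ := rfl }

lemma splitCount_succ [Fintype ι] [Nontrivial ι] [Fintype α] (k : ℕ) :
    splitCount ι α (k + 1) = Fintype.card α * splitCount ι α k +
      (Fintype.card α).descFactorial (Fintype.card ι) * Fintype.card α ^ (Fintype.card ι * k) := by
  classical
  have hdisj : Disjoint (fun p : (ι → α) × (ι → Fin k → α) => (∀ a b, p.1 a = p.1 b) ∧ IsSplit p.2)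
      (fun p => Injective p.1) := by
    refine Pi.disjoint_iff.2 fun p => Prop.disjoint_iff.2 ?_
    rintro ⟨⟨hconst, -⟩, hinj⟩
    obtain ⟨a, b, hab⟩ := exists_pair_ne ι
    exact hab (hinj (hconst a b))
  have hsplit : splitCount ι α (k + 1) =
      Nat.card {p : (ι → α) × (ι → Fin k → α) // ((∀ a b, p.1 a = p.1 b) ∧ IsSplit p.2) ∨
        Injective p.1} :=
    Nat.card_congr <| ((consEquiv ι α k).subtypeEquiv fun _ => Iff.rfl).symm.trans <|
      Equiv.subtypeEquivRight fun p => isSplit_cons_iff p.1 p.2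
  have hconst : Nat.card {p : (ι → α) × (ι → Fin k → α) //
      (∀ a b, p.1 a = p.1 b) ∧ IsSplit p.2} = Fintype.card α * splitCount ι α k := by
    calc _ = Nat.card ({x : ι → α // ∀ a b, x a = x b} × {t : ι → Fin k → α // IsSplit t}) :=
          Nat.card_congr Equiv.subtypeProdEquivProd
      _ = _ := by rw [Nat.card_prod, card_constant_functions, Nat.card_eq_fintype_card, splitCount]
  have hinj : Nat.card {p : (ι → α) × (ι → Fin k → α) // Injective p.1} =
      (Fintype.card α).descFactorial (Fintype.card ι) * Fintype.card α ^ (Fintype.card ι * k) := by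
    calc _ = Nat.card ((ι ↪ α) × (ι → Fin k → α)) :=
          Nat.card_congr <| Equiv.prodSubtypeFstEquivSubtypeProd.trans <|
            (Equiv.subtypeInjectiveEquivEmbedding ι α).prodCongr (Equiv.refl _)
      _ = _ := by
        simp only [Nat.card_eq_fintype_card, Fintype.card_prod, Fintype.card_fun, Fintype.card_fin,
          Fintype.card_embedding_eq, ← pow_mul, mul_comm k]
  rw [hsplit, Nat.card_congr (subtypeOrEquiv _ _ hdisj), Nat.card_sum, hconst, hinj]

lemma splitCount_mul_eq [Fintype ι] [Nontrivial ι] [Fintype α] (k : ℕ) :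
    (splitCount ι α k : ℚ) * ((Fintype.card α : ℚ) ^ Fintype.card ι - Fintype.card α) =
      (Fintype.card α).descFactorial (Fintype.card ι) *
        ((Fintype.card α : ℚ) ^ (Fintype.card ι * k) - (Fintype.card α : ℚ) ^ k) := by
  induction k with
  | zero => simp [splitCount_zero]
  | succ k ih =>
    rw [splitCount_succ]
    push_cast
    rw [mul_add, mul_one, pow_add, pow_succ]
    linear_combination (Fintype.card α : ℚ) * ih

end Split

variable {r k : ℕ}

def IsRainbowTriangle (c : Sym2 (Fin r) → Fin r) (T : Finset (Fin k → Fin r)) : Prop :=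
  T.card = 3 ∧
    ∀ u ∈ T, ∀ v ∈ T, ∀ u' ∈ T, ∀ v' ∈ T, u ≠ v → u' ≠ v' →
      ({u, v} : Finset (Fin k → Fin r)) ≠ {u', v'} → blowColor c u v ≠ blowColor c u' v'

lemma blowColor_eq_of_eqOn (c : Sym2 (Fin r) → Fin r) {u v : Fin k → Fin r} {j : Fin k}
    (hlt : ∀ i < j, u i = v i) (hj : u j ≠ v j) : blowColor c u v = c s(u j, v j) := by
  have hmem : j ∈ univ.filter fun i => u i ≠ v i := by simp [hj]
  have hmin : (univ.filter fun i => u i ≠ v i).min' ⟨j, hmem⟩ = j := by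
    refine le_antisymm (min'_le _ _ hmem) (not_lt.1 fun h => ?_)
    have hm := min'_mem _ ⟨j, hmem⟩
    exact (mem_filter.1 hm).2 (hlt _ h)
  rw [blowColor, dif_pos ⟨j, hmem⟩, hmin]

lemma isRainbowTriangle_image (c : Sym2 (Fin r) → Fin r) (hc : Parallel c)
    {t : Fin 3 → Fin k → Fin r} (ht : IsSplit t) : IsRainbowTriangle c (univ.image t) := by
  obtain ⟨j, hlt, hj⟩ := id ht
  have hcolor : ∀ a b, a ≠ b → blowColor c (t a) (t b) = c (s(a, b).map fun d => t d j) :=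
    fun a b hab => blowColor_eq_of_eqOn c (fun i hi => hlt i hi a b) (hj.ne hab)
  refine ⟨by rw [card_image_of_injective _ ht.injective, card_univ, Fintype.card_fin], ?_⟩
  simp only [mem_image, mem_univ, true_and, forall_exists_index, forall_apply_eq_imp_iff]
  intro a b a' b' hab hab' hpair
  have hne : s(a, b) ≠ s(a', b') := by
    intro h
    rcases Sym2.eq_iff.1 h with ⟨rfl, rfl⟩ | ⟨rfl, rfl⟩
    exacts [hpair rfl, hpair (pair_comm _ _)]
  rw [hcolor a b (ne_of_apply_ne t hab), hcolor a' b' (ne_of_apply_ne t hab'), Ne, Fin.val_inj]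
  exact hc.apply_map_ne_apply_map hj (Sym2.mk_isDiag_iff.not.2 (ne_of_apply_ne t hab))
    (Sym2.mk_isDiag_iff.not.2 (ne_of_apply_ne t hab')) hne

end IteratedBlowUp

open IteratedBlowUp in
/-- For a parallel `r`-coloring of `K_r` (`r ≥ 3`), the number of rainbow triangles in the
`k`-fold iterated blow-up coloring of `K_{r^k}` is at least
`(r^{3k} - r^k)/(r^3 - r) * C(r,3)`. -/
theorem stmt_18 (r k : ℕ) (hr : 3 ≤ r) (c : Sym2 (Fin r) → Fin r) (hc : Parallel c) :
    ((r : ℚ) ^ (3 * k) - (r : ℚ) ^ k) / ((r : ℚ) ^ 3 - r) * (r.choose 3 : ℚ) ≤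
      ({T : Finset (Fin k → Fin r) | T.card = 3 ∧
          ∀ u ∈ T, ∀ v ∈ T, ∀ u' ∈ T, ∀ v' ∈ T, u ≠ v → u' ≠ v' →
            ({u, v} : Finset (Fin k → Fin r)) ≠ {u', v'} →
            blowColor c u v ≠ blowColor c u' v'}.ncard : ℚ) := by
  have hsplit_le : splitCount (Fin 3) (Fin r) k ≤ 6 * {T | IsRainbowTriangle c T}.ncard :=
    (Finite.card_le_of_embedding <| Subtype.impEmbedding _ _ fun _ ht =>
      ⟨ht.injective, isRainbowTriangle_image c hc ht⟩).trans
      (card_le_factorial_mul_ncard _ fun _ hT => hT.1)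
  have hclosed := splitCount_mul_eq (ι := Fin 3) (α := Fin r) k
  simp only [Fintype.card_fin, Nat.descFactorial_eq_factorial_mul_choose] at hclosed
  have hpos : (0 : ℚ) < (r : ℚ) ^ 3 - r := by
    have h3 : (3 : ℚ) ≤ r := by exact_mod_cast hr
    rw [show (r : ℚ) ^ 3 - r = r * (r - 1) * (r + 1) by ring]
    exact mul_pos (mul_pos (by linarith) (by linarith)) (by linarith)
  calc _ = (splitCount (Fin 3) (Fin r) k : ℚ) / 6 := by
        rw [eq_div_iff (by norm_num), ← mul_div_cancel_right₀ (splitCount _ _ k : ℚ) hpos.ne',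
          hclosed]
        push_cast
        ring
    _ ≤ _ := by
        rw [div_le_iff₀ (by norm_num), mul_comm]
        exact_mod_cast hsplit_le
end
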